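/- If G is a path on n ≥ 4 vertices, then the isolation subdivision number sd_ι(G) equals 1 if n ≡ 1 (mod 4), 2 if n ≡ 0 (mod 4), 3 if n ≡ 3 (mod 4), and 4 if n ≡ 2 (mod 4). -/

import Mathlib

/-!
Subdividing `k` edges of `P_n` gives a graph isomorphic to `P_{n+k}`: put vertex `v` at position
`2v` and the vertex subdividing `s(v, v+1)` at `2v + 1`; adjacency is then exactly adjacency of
positions in the increasing enumeration. Moreover `ι(P_m) = ⌊(m + 2) / 4⌋`: one vertex in each
block of four consecutive vertices isolates, and the edges `{4j, 4j+1}` need pairwise distinct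
vertices of an isolating set. Hence `sd_ι(P_n)` is the least `k ≥ 1` with
`⌊(n + k + 2) / 4⌋ > ⌊(n + 2) / 4⌋`, the distance from `n + 2` to the next multiple of `4`.
-/

open SimpleGraph

/-- `v` lies in the closed neighbourhood of the set `D`. -/
def inClosedNbhd {V : Type*} (G : SimpleGraph V) (D : Set V) (v : V) : Prop :=
  ∃ d ∈ D, d = v ∨ G.Adj d v

/-- `D` is an isolating set of `G`: the graph induced on the vertices outside
`N[D]` has no edges. -/
def IsIsolating {V : Type*} (G : SimpleGraph V) (D : Set V) : Prop :=
  ∀ u v : V, G.Adj u v → inClosedNbhd G D u ∨ inClosedNbhd G D v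

/-- The isolation number of a finite graph. -/
noncomputable def iso {V : Type*} (G : SimpleGraph V) [Fintype V] : ℕ :=
  sInf {n | ∃ D : Finset V, D.card = n ∧ IsIsolating G ↑D}

/-- The graph obtained from `G` by subdividing each edge in `A` once; the new
(subdivision) vertices are the elements of `A`. -/
def subdivide {V : Type*} (G : SimpleGraph V) (A : Finset (Sym2 V)) :
    SimpleGraph (V ⊕ {e : Sym2 V // e ∈ A}) where
  Adj x y :=
    match x, y with
    | Sum.inl u, Sum.inl v => G.Adj u v ∧ s(u, v) ∉ A
    | Sum.inl u, Sum.inr e => u ∈ (e : Sym2 V)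
    | Sum.inr e, Sum.inl u => u ∈ (e : Sym2 V)
    | Sum.inr _, Sum.inr _ => False
  symm := by
    constructor
    rintro (u | e) (v | f) h <;> dsimp only at h ⊢ <;>
      first
        | exact ⟨h.1.symm, by rw [Sym2.eq_swap]; exact h.2⟩
        | exact h
        | exact h.elim
  loopless := by
    constructor
    rintro (u | e) h <;> dsimp only at h <;>
      first
        | exact G.irrefl h.1
        | exact h

/-- A graph is `(ι,q)`-critical. -/
def IotaCritical {V : Type*} (G : SimpleGraph V) [Fintype V] (q : ℕ) : Prop :=
  (∀ A : Finset (Sym2 V), ↑A ⊆ G.edgeSet → A.card = q →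
      iso G < iso (subdivide G A)) ∧
  (∃ A : Finset (Sym2 V), ↑A ⊆ G.edgeSet ∧ A.card = q - 1 ∧
      iso (subdivide G A) = iso G)

/-- The isolation subdivision number of a graph. -/
noncomputable def sdi {V : Type*} (G : SimpleGraph V) [Fintype V] : ℕ :=
  sInf {k | ∃ A : Finset (Sym2 V), ↑A ⊆ G.edgeSet ∧ A.card = k ∧
    iso G < iso (subdivide G A)}

section Isolation

variable {V W : Type*} {G : SimpleGraph V} {H : SimpleGraph W}

lemma iso_le_card [Fintype V] {D : Finset V} (hD : IsIsolating G ↑D) : iso G ≤ D.card :=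
  Nat.sInf_le ⟨D, rfl, hD⟩

lemma exists_isIsolating_card_eq_iso [Fintype V] (G : SimpleGraph V) :
    ∃ D : Finset V, D.card = iso G ∧ IsIsolating G ↑D := by
  classical
  have hne : {n | ∃ D : Finset V, D.card = n ∧ IsIsolating G ↑D}.Nonempty :=
    ⟨_, Finset.univ, rfl, fun u _ _ => Or.inl ⟨u, by simp, Or.inl rfl⟩⟩
  exact Nat.sInf_mem hne

lemma inClosedNbhd.image (ψ : G ≃g H) {D : Set V} {v : V} (h : inClosedNbhd G D v) :
    inClosedNbhd H (ψ '' D) (ψ v) := by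
  obtain ⟨d, hd, hdv⟩ := h
  exact ⟨ψ d, Set.mem_image_of_mem ψ hd, hdv.imp (congrArg ψ) ψ.map_adj_iff.2⟩

lemma IsIsolating.image (ψ : G ≃g H) {D : Set V} (hD : IsIsolating G D) :
    IsIsolating H (ψ '' D) := by
  intro u v huv
  have := hD _ _ (ψ.symm.map_adj_iff.2 huv)
  simpa using this.imp (inClosedNbhd.image ψ) (inClosedNbhd.image ψ)

lemma iso_le_of_graphIso [Fintype V] [Fintype W] (ψ : G ≃g H) : iso H ≤ iso G := by
  classical
  obtain ⟨D, hcard, hD⟩ := exists_isIsolating_card_eq_iso G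
  calc iso H ≤ (D.image ψ).card := iso_le_card (by simpa using hD.image ψ)
    _ ≤ iso G := hcard ▸ Finset.card_image_le

lemma iso_congr [Fintype V] [Fintype W] (ψ : G ≃g H) : iso G = iso H :=
  le_antisymm (iso_le_of_graphIso ψ.symm) (iso_le_of_graphIso ψ)

end Isolation

lemma inClosedNbhd_pathGraph_iff {m : ℕ} {D : Set (Fin m)} {v : Fin m} :
    inClosedNbhd (pathGraph m) D v ↔ ∃ d ∈ D, v.val ≤ d.val + 1 ∧ d.val ≤ v.val + 1 := by
  simp only [inClosedNbhd, pathGraph_adj, Fin.ext_iff]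
  exact exists_congr fun d => and_congr_right fun _ => by omega

lemma iso_pathGraph_le (m : ℕ) : iso (pathGraph m) ≤ (m + 2) / 4 := by
  classical
  -- one vertex in each block `4j, …, 4j + 3`: the third one, or the last vertex of the path
  let D : Finset (Fin m) := Finset.univ.filter fun v =>
    v.val / 4 < (m + 2) / 4 ∧ v.val = min (4 * (v.val / 4) + 2) (m - 1)
  have hD : IsIsolating (pathGraph m) ↑D := by
    suffices ∀ u v : Fin m, u.val + 1 = v.val →
        inClosedNbhd (pathGraph m) ↑D u ∨ inClosedNbhd (pathGraph m) ↑D v by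
      intro u v huv
      rcases pathGraph_adj.1 huv with h | h
      · exact this u v h
      · exact (this v u h).symm
    intro u v huv
    have := v.isLt
    let d : Fin m := ⟨min (4 * (u.val / 4) + 2) (m - 1), by omega⟩
    have hd_val : d.val = min (4 * (u.val / 4) + 2) (m - 1) := rfl
    have hd : d ∈ D := by simp only [D, Finset.mem_filter, Finset.mem_univ, true_and]; omega
    simp only [inClosedNbhd_pathGraph_iff]
    by_cases hdu : d.val ≤ u.val + 1
    · exact Or.inl ⟨d, hd, by omega, hdu⟩
    · exact Or.inr ⟨d, hd, by omega, by omega⟩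
  have hmem : ∀ v, v ∈ D ↔
      v.val / 4 < (m + 2) / 4 ∧ v.val = min (4 * (v.val / 4) + 2) (m - 1) := by
    simp [D]
  refine (iso_le_card hD).trans ?_
  simpa using Finset.card_le_card_of_injOn (fun v : Fin m => v.val / 4)
    (fun v hv => Finset.mem_range.2 ((hmem v).1 hv).1)
    (fun v hv w hw hvw => by
      have := (hmem v).1 hv; have := (hmem w).1 hw
      exact Fin.ext (by simp only at hvw; omega))

lemma le_iso_pathGraph (m : ℕ) : (m + 2) / 4 ≤ iso (pathGraph m) := by
  classical
  obtain ⟨D, hcard, hD⟩ := exists_isIsolating_card_eq_iso (pathGraph m)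
  -- the edge `4j — 4j+1` forces a vertex of `D` among `4j - 1, …, 4j + 2`
  have hcover : Finset.range ((m + 2) / 4) ⊆ D.image fun d => (d.val + 1) / 4 := by
    intro j hj
    rw [Finset.mem_range] at hj
    have hadj : (pathGraph m).Adj ⟨4 * j, by omega⟩ ⟨4 * j + 1, by omega⟩ :=
      pathGraph_adj.2 (Or.inl rfl)
    rw [Finset.mem_image]
    rcases hD _ _ hadj with h | h <;> obtain ⟨d, hd, h⟩ := inClosedNbhd_pathGraph_iff.1 h <;>
      exact ⟨d, hd, by simp only at h; omega⟩
  simpa [hcard] using (Finset.card_le_card hcover).trans Finset.card_image_le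

lemma iso_pathGraph (m : ℕ) : iso (pathGraph m) = (m + 2) / 4 :=
  le_antisymm (iso_pathGraph_le m) (le_iso_pathGraph m)

lemma nonempty_iso_pathGraph_of_adj_iff {V α : Type*} [Fintype V] [LinearOrder α]
    (G : SimpleGraph V) (p : V → α) (hp : Function.Injective p)
    (hadj : ∀ x y, p x < p y → (G.Adj x y ↔ ∀ z, ¬(p x < p z ∧ p z < p y))) :
    Nonempty (G ≃g pathGraph (Fintype.card V)) := by
  classical
  let e : V ≃ Set.range p := Equiv.ofInjective p hp
  let o : Set.range p ≃o Fin (Fintype.card V) :=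
    (Fintype.orderIsoFinOfCardEq _ (Set.card_range_of_injective hp)).symm
  have hcov : ∀ x y, e x ⋖ e y ↔ p x < p y ∧ ∀ z, ¬(p x < p z ∧ p z < p y) := by
    intro x y
    simp only [CovBy, Subtype.forall, Set.mem_range, forall_exists_index, e,
      Equiv.ofInjective_apply]
    refine and_congr_right fun _ => ⟨fun h z hz => h _ z rfl hz.1 hz.2, ?_⟩
    rintro h _ z rfl hxz
    exact fun hzy => h z ⟨hxz, hzy⟩
  have hG : ∀ x y, G.Adj x y ↔ e x ⋖ e y ∨ e y ⋖ e x := by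
    intro x y
    rcases lt_trichotomy (p x) (p y) with h | h | h
    · simp [hadj x y h, hcov, h, h.not_gt]
    · simp [hp h]
    · simp [G.adj_comm x y, hadj y x h, hcov, h, h.not_gt]
  exact ⟨⟨e.trans o.toEquiv, fun {x y} => by
    simp [pathGraph, hasse_adj, apply_covBy_apply_iff, hG]⟩⟩

section Subdivide

variable {V : Type*} {G : SimpleGraph V} {A : Finset (Sym2 V)}

@[simp] lemma subdivide_adj_inl_inl {u v : V} :
    (subdivide G A).Adj (.inl u) (.inl v) ↔ G.Adj u v ∧ s(u, v) ∉ A := Iff.rfl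

@[simp] lemma subdivide_adj_inl_inr {u : V} {e : {e // e ∈ A}} :
    (subdivide G A).Adj (.inl u) (.inr e) ↔ u ∈ (e : Sym2 V) := Iff.rfl

@[simp] lemma subdivide_adj_inr_inl {u : V} {e : {e // e ∈ A}} :
    (subdivide G A).Adj (.inr e) (.inl u) ↔ u ∈ (e : Sym2 V) := Iff.rfl

@[simp] lemma subdivide_adj_inr_inr {e f : {e // e ∈ A}} :
    ¬(subdivide G A).Adj (.inr e) (.inr f) := id

end Subdivide

lemma exists_eq_of_mem_edgeSet_pathGraph {n : ℕ} {e : Sym2 (Fin n)}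
    (he : e ∈ (pathGraph n).edgeSet) : ∃ u v : Fin n, u.val + 1 = v.val ∧ e = s(u, v) := by
  induction e using Sym2.ind with
  | _ u v =>
    rcases pathGraph_adj.1 he with h | h
    · exact ⟨u, v, h, rfl⟩
    · exact ⟨v, u, h, Sym2.eq_swap⟩

section SubdividePath

variable {n : ℕ} {A : Finset (Sym2 (Fin n))}

/-- Vertex `v` of the path sits at `2v`, the vertex subdividing `s(v, v + 1)` at `2v + 1`. -/
def subdividePathPos (A : Finset (Sym2 (Fin n))) : Fin n ⊕ {e // e ∈ A} → ℕ
  | .inl v => 2 * v.val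
  | .inr e => Sym2.lift ⟨fun u v => u.val + v.val, fun _ _ => add_comm _ _⟩ e.val

@[simp] lemma subdividePathPos_inl (v : Fin n) : subdividePathPos A (.inl v) = 2 * v.val := rfl

@[simp] lemma subdividePathPos_inr_mk {u v : Fin n} (h : s(u, v) ∈ A) :
    subdividePathPos A (.inr ⟨s(u, v), h⟩) = u.val + v.val := rfl

variable (hA : ↑A ⊆ (pathGraph n).edgeSet)
include hA

lemma subdividePathPos_injective : Function.Injective (subdividePathPos A) := by
  rintro (u | ⟨e, he⟩) (v | ⟨f, hf⟩) h
  · exact congrArg _ (Fin.ext (by simp only [subdividePathPos_inl] at h; omega))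
  · obtain ⟨a, b, hab, rfl⟩ := exists_eq_of_mem_edgeSet_pathGraph (hA hf)
    simp only [subdividePathPos_inl, subdividePathPos_inr_mk] at h
    omega
  · obtain ⟨a, b, hab, rfl⟩ := exists_eq_of_mem_edgeSet_pathGraph (hA he)
    simp only [subdividePathPos_inl, subdividePathPos_inr_mk] at h
    omega
  · obtain ⟨a, b, hab, rfl⟩ := exists_eq_of_mem_edgeSet_pathGraph (hA he)
    obtain ⟨c, d, hcd, rfl⟩ := exists_eq_of_mem_edgeSet_pathGraph (hA hf)
    simp only [subdividePathPos_inr_mk] at h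
    obtain rfl : a = c := Fin.ext (by omega)
    obtain rfl : b = d := Fin.ext (by omega)
    rfl

lemma subdivide_pathGraph_adj_iff {x y : Fin n ⊕ {e // e ∈ A}}
    (hxy : subdividePathPos A x < subdividePathPos A y) :
    (subdivide (pathGraph n) A).Adj x y ↔
      ∀ z, ¬(subdividePathPos A x < subdividePathPos A z ∧
        subdividePathPos A z < subdividePathPos A y) := by
  rcases x with u | ⟨e, he⟩ <;> rcases y with v | ⟨f, hf⟩
  · simp only [subdividePathPos_inl] at hxy ⊢
    simp only [subdivide_adj_inl_inl, pathGraph_adj]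
    constructor
    · rintro ⟨huv, hnot⟩ (w | ⟨g, hg⟩) hz
      · simp only [subdividePathPos_inl] at hz
        omega
      · obtain ⟨c, d, hcd, rfl⟩ := exists_eq_of_mem_edgeSet_pathGraph (hA hg)
        simp only [subdividePathPos_inr_mk] at hz
        obtain rfl : c = u := Fin.ext (by omega)
        obtain rfl : d = v := Fin.ext (by omega)
        exact hnot hg
    · intro h
      refine ⟨Or.inl ?_, fun hmem => h (.inr ⟨_, hmem⟩) (by simp; omega)⟩
      by_contra hne
      exact h (.inl ⟨u.val + 1, by omega⟩) (by simp; omega)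
  · obtain ⟨a, b, hab, rfl⟩ := exists_eq_of_mem_edgeSet_pathGraph (hA hf)
    simp only [subdividePathPos_inl, subdividePathPos_inr_mk] at hxy ⊢
    simp only [subdivide_adj_inl_inr, Sym2.mem_iff, Fin.ext_iff]
    constructor
    · intro h z hz
      omega
    · intro h
      by_contra hne
      exact h (.inl a) (by simp; omega)
  · obtain ⟨a, b, hab, rfl⟩ := exists_eq_of_mem_edgeSet_pathGraph (hA he)
    simp only [subdividePathPos_inl, subdividePathPos_inr_mk] at hxy ⊢
    simp only [subdivide_adj_inr_inl, Sym2.mem_iff, Fin.ext_iff]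
    constructor
    · intro h z hz
      omega
    · intro h
      by_contra hne
      exact h (.inl b) (by simp; omega)
  · obtain ⟨a, b, hab, rfl⟩ := exists_eq_of_mem_edgeSet_pathGraph (hA he)
    obtain ⟨c, d, hcd, rfl⟩ := exists_eq_of_mem_edgeSet_pathGraph (hA hf)
    simp only [subdividePathPos_inr_mk] at hxy ⊢
    simp only [subdivide_adj_inr_inr, false_iff, not_forall, not_not]
    exact ⟨.inl b, by simp; omega⟩

lemma nonempty_subdivide_pathGraph_iso :
    Nonempty (subdivide (pathGraph n) A ≃g pathGraph (n + A.card)) := by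
  have := nonempty_iso_pathGraph_of_adj_iff _ _ (subdividePathPos_injective hA)
    fun _ _ => subdivide_pathGraph_adj_iff hA
  rwa [Fintype.card_sum, Fintype.card_fin, Fintype.card_coe] at this

end SubdividePath

lemma iso_subdivide_pathGraph {n : ℕ} {A : Finset (Sym2 (Fin n))}
    (hA : ↑A ⊆ (pathGraph n).edgeSet) :
    iso (subdivide (pathGraph n) A) = (n + A.card + 2) / 4 := by
  obtain ⟨ψ⟩ := nonempty_subdivide_pathGraph_iso hA
  rw [iso_congr ψ, iso_pathGraph]

lemma exists_subset_edgeSet_pathGraph_card_eq {n t : ℕ} (ht : t < n) :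
    ∃ A : Finset (Sym2 (Fin n)), ↑A ⊆ (pathGraph n).edgeSet ∧ A.card = t := by
  let f : Fin t ↪ Sym2 (Fin n) :=
    ⟨fun i => s(⟨i, by omega⟩, ⟨i + 1, by omega⟩), fun i j h => by
      simp only [Sym2.eq_iff, Fin.ext_iff] at h; omega⟩
  refine ⟨Finset.univ.map f, ?_, by simp⟩
  intro e he
  obtain ⟨i, -, rfl⟩ := Finset.mem_map.1 he
  exact pathGraph_adj.2 (Or.inl rfl)

lemma sdi_pathGraph_eq {n t : ℕ} (htn : t < n) (hlt : (n + 2) / 4 < (n + t + 2) / 4)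
    (hmin : ∀ k < t, (n + k + 2) / 4 ≤ (n + 2) / 4) :
    sdi (pathGraph n) = t := by
  obtain ⟨A, hA, rfl⟩ := exists_subset_edgeSet_pathGraph_card_eq htn
  refine IsLeast.csInf_eq ⟨⟨A, hA, rfl, by rwa [iso_pathGraph, iso_subdivide_pathGraph hA]⟩, ?_⟩
  rintro k ⟨B, hB, rfl, hB_lt⟩
  rw [iso_pathGraph, iso_subdivide_pathGraph hB] at hB_lt
  by_contra! hk
  exact (hmin _ hk).not_gt hB_lt

theorem stmt5 (n : ℕ) (hn : 4 ≤ n) :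
    (n % 4 = 1 → sdi (SimpleGraph.pathGraph n) = 1) ∧
    (n % 4 = 0 → sdi (SimpleGraph.pathGraph n) = 2) ∧
    (n % 4 = 3 → sdi (SimpleGraph.pathGraph n) = 3) ∧
    (n % 4 = 2 → sdi (SimpleGraph.pathGraph n) = 4) := by
  refine ⟨fun h => ?_, fun h => ?_, fun h => ?_, fun h => ?_⟩ <;>
    exact sdi_pathGraph_eq (by omega) (by omega) fun k hk => by omega
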